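/- Let A be a commutative ring, F ∈ A, and R := A[z]/(z² − F), so that R is a free A-module with basis {1, z}. Let N be a 2×2 matrix over A with trace zero and N² = F·Id, and let M := A² be the corresponding R-module in which z acts as N. Write each R-linear map φ : M → R uniquely as φ(m) = φ₁(m) + φ₂(m)·z with φ₁, φ₂ : M → A A-linear. Then the assignment φ ↦ φ₂ is an A-module isomorphism from Hom_R(M, R) onto Hom_A(M, A), under which multiplication by z on Hom_R(M, R) corresponds to the endomorphism φ₂ ↦ φ₂ ∘ N of Hom_A(M, A); in particular Hom_R(M, R) is isomorphic as an R-module to the module A² with z acting by the transpose matrix Nᵗ. -/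
import Mathlib


open Polynomial

noncomputable section

variable {A : Type} [CommRing A]

/-- The endomorphism of `A²` given by a `2×2` matrix. -/
def matToEnd (N : Matrix (Fin 2) (Fin 2) A) : Module.End A (Fin 2 → A) :=
  Matrix.toLinAlgEquiv' N

lemma matToEnd_sq {F : A} {N : Matrix (Fin 2) (Fin 2) A} (h : N * N = F • 1) :
    matToEnd N * matToEnd N = algebraMap A (Module.End A (Fin 2 → A)) F := by
  rw [matToEnd, ← map_mul, h, Algebra.smul_def, map_mul, AlgEquiv.commutes, map_one, mul_one]

/-- The action of `R = A[z]/(z²−F)` on an `A`-module `M` determined by an `A`-linear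
endomorphism `N` with `N² = F·Id`. -/
def zLift (F : A) {M : Type} [AddCommGroup M] [Module A M]
    (N : Module.End A M) (hN : N * N = algebraMap A (Module.End A M) F) :
    AdjoinRoot (X ^ 2 - C F : A[X]) →+* Module.End A M :=
  Ideal.Quotient.lift _ (Polynomial.aeval N).toRingHom (by
    intro p hp
    obtain ⟨q, rfl⟩ := Ideal.mem_span_singleton.mp hp
    have h0 : (Polynomial.aeval N) (X ^ 2 - C F : A[X]) = 0 := by
      simp [map_sub, map_pow, sq, hN]
    simp [map_mul, h0])

/-- `M` as a module over `R = A[z]/(z²−F)`, with `z` acting as `N`. -/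
def zModule (F : A) {M : Type} [AddCommGroup M] [Module A M]
    (N : Module.End A M) (hN : N * N = algebraMap A (Module.End A M) F) :
    Module (AdjoinRoot (X ^ 2 - C F : A[X])) M :=
  Module.compHom M (zLift F N hN)

/-!
STATEMENT 3: Let `A` be a commutative ring, `F ∈ A`, and `R := A[z]/(z² − F)`, so that `R` is a
free `A`-module with basis `{1, z}`.  Let `N` be a `2×2` matrix over `A` with trace zero and
`N² = F·Id`, and let `M := A²` be the corresponding `R`-module in which `z` acts as `N`.
Write each `R`-linear map `φ : M → R` uniquely as `φ(m) = φ₁(m) + φ₂(m)·z` with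
`φ₁, φ₂ : M → A` `A`-linear.  Then `φ ↦ φ₂` is an `A`-module isomorphism from `Hom_R(M, R)`
onto `Hom_A(M, A)` under which multiplication by `z` on `Hom_R(M, R)` corresponds to
`φ₂ ↦ φ₂ ∘ N`; in particular `Hom_R(M, R)` is isomorphic as an `R`-module to the module `A²`
with `z` acting by the transpose matrix `Nᵗ` (an `R`-module isomorphism being precisely an
`A`-linear isomorphism intertwining the actions of `z`).
-/

/-! ### Auxiliary lemmas -/

lemma qMonic (F : A) : (X ^ 2 - C F : A[X]).Monic := monic_X_pow_sub_C F two_ne_zero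

/-- The coefficient functionals on `R = A[z]/(z²-F)`. -/
def coefLM (F : A) (i : ℕ) : AdjoinRoot (X ^ 2 - C F : A[X]) →ₗ[A] A :=
  (lcoeff A i).comp (AdjoinRoot.modByMonicHom (qMonic F))

lemma root_sq (F : A) :
    AdjoinRoot.root (X ^ 2 - C F : A[X]) ^ 2
      = algebraMap A (AdjoinRoot (X ^ 2 - C F : A[X])) F := by
  have h := AdjoinRoot.mk_self (f := (X ^ 2 - C F : A[X]))
  rw [map_sub, map_pow, AdjoinRoot.mk_X, sub_eq_zero] at h
  rw [h, AdjoinRoot.algebraMap_eq]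
  rfl

lemma coef_mk [Nontrivial A] (F : A) (i : ℕ) (p : A[X]) (hp : p.degree < 2) :
    coefLM F i (AdjoinRoot.mk _ p) = p.coeff i := by
  have hd : p.degree < (X ^ 2 - C F : A[X]).degree := by
    rwa [degree_X_pow_sub_C (by norm_num) F]
  simp [coefLM, AdjoinRoot.modByMonicHom_mk, (modByMonic_eq_self_iff (qMonic F)).2 hd]

lemma coef0_alg [Nontrivial A] (F : A) (x : A) :
    coefLM F 0 (algebraMap A (AdjoinRoot (X ^ 2 - C F : A[X])) x) = x := by
  rw [AdjoinRoot.algebraMap_eq, show (AdjoinRoot.of _) x = AdjoinRoot.mk _ (C x) from rfl,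
    coef_mk F 0 _ ((degree_C_le).trans_lt (by norm_num))]
  simp

lemma coef1_alg [Nontrivial A] (F : A) (x : A) :
    coefLM F 1 (algebraMap A (AdjoinRoot (X ^ 2 - C F : A[X])) x) = 0 := by
  rw [AdjoinRoot.algebraMap_eq, show (AdjoinRoot.of _) x = AdjoinRoot.mk _ (C x) from rfl,
    coef_mk F 1 _ ((degree_C_le).trans_lt (by norm_num))]
  simp

lemma coef0_algX [Nontrivial A] (F : A) (x : A) :
    coefLM F 0 (algebraMap A (AdjoinRoot (X ^ 2 - C F : A[X])) x *
      AdjoinRoot.root (X ^ 2 - C F : A[X])) = 0 := by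
  rw [AdjoinRoot.algebraMap_eq, show (AdjoinRoot.of _) x = AdjoinRoot.mk _ (C x) from rfl,
    ← AdjoinRoot.mk_X (f := (X ^ 2 - C F : A[X])), ← map_mul,
    coef_mk F 0 _ ?_]
  · simp
  · exact (degree_C_mul_X_le x).trans_lt (by norm_num)

lemma coef1_algX [Nontrivial A] (F : A) (x : A) :
    coefLM F 1 (algebraMap A (AdjoinRoot (X ^ 2 - C F : A[X])) x *
      AdjoinRoot.root (X ^ 2 - C F : A[X])) = x := by
  rw [AdjoinRoot.algebraMap_eq, show (AdjoinRoot.of _) x = AdjoinRoot.mk _ (C x) from rfl,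
    ← AdjoinRoot.mk_X (f := (X ^ 2 - C F : A[X])), ← map_mul,
    coef_mk F 1 _ ?_]
  · simp
  · exact (degree_C_mul_X_le x).trans_lt (by norm_num)

lemma decomp [Nontrivial A] (F : A) (r : AdjoinRoot (X ^ 2 - C F : A[X])) :
    r = algebraMap A _ (coefLM F 0 r) +
        algebraMap A _ (coefLM F 1 r) * AdjoinRoot.root (X ^ 2 - C F : A[X]) := by
  obtain ⟨p, rfl⟩ := AdjoinRoot.mk_surjective r
  set s := p %ₘ (X ^ 2 - C F : A[X]) with hs
  have hds : s.degree < 2 := by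
    simpa [degree_X_pow_sub_C (by norm_num : 0 < 2) F] using
      degree_modByMonic_lt p (qMonic F)
  have hmk : AdjoinRoot.mk (X ^ 2 - C F : A[X]) s = AdjoinRoot.mk _ p := by
    conv_rhs => rw [← AdjoinRoot.mk_leftInverse (qMonic F) (AdjoinRoot.mk _ p)]
    rw [AdjoinRoot.modByMonicHom_mk]
  have hc0 : coefLM F 0 (AdjoinRoot.mk _ p) = s.coeff 0 := by
    simp [coefLM, AdjoinRoot.modByMonicHom_mk, hs]
  have hc1 : coefLM F 1 (AdjoinRoot.mk _ p) = s.coeff 1 := by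
    simp [coefLM, AdjoinRoot.modByMonicHom_mk, hs]
  rw [hc0, hc1, ← hmk]
  have hnd : s.natDegree ≤ 1 := by
    by_cases h0 : s = 0
    · simp [h0]
    · exact Nat.lt_succ_iff.mp ((natDegree_lt_iff_degree_lt h0).mpr (by exact_mod_cast hds))
  have hsplit : s = C (s.coeff 1) * X + C (s.coeff 0) := eq_X_add_C_of_natDegree_le_one hnd
  conv_lhs => rw [hsplit]
  simp only [map_add, map_mul, AdjoinRoot.mk_C, AdjoinRoot.mk_X, ← AdjoinRoot.algebraMap_eq]
  ring

lemma root_mul_decomp [Nontrivial A] (F : A) (r : AdjoinRoot (X ^ 2 - C F : A[X])) :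
    AdjoinRoot.root (X ^ 2 - C F : A[X]) * r
      = algebraMap A _ (F * coefLM F 1 r) +
        algebraMap A _ (coefLM F 0 r) * AdjoinRoot.root (X ^ 2 - C F : A[X]) := by
  conv_lhs => rw [decomp F r]
  have : AdjoinRoot.root (X ^ 2 - C F : A[X]) *
      (algebraMap A _ (coefLM F 0 r) +
        algebraMap A _ (coefLM F 1 r) * AdjoinRoot.root (X ^ 2 - C F : A[X]))
      = algebraMap A _ (coefLM F 1 r) * AdjoinRoot.root (X ^ 2 - C F : A[X]) ^ 2 +
        algebraMap A _ (coefLM F 0 r) * AdjoinRoot.root (X ^ 2 - C F : A[X]) := by ring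
  rw [this, root_sq, ← map_mul, mul_comm ((coefLM F 1) r) F]

lemma coef0_root_mul [Nontrivial A] (F : A) (r : AdjoinRoot (X ^ 2 - C F : A[X])) :
    coefLM F 0 (AdjoinRoot.root (X ^ 2 - C F : A[X]) * r) = F * coefLM F 1 r := by
  rw [root_mul_decomp, map_add, coef0_alg, coef0_algX, add_zero]

lemma coef1_root_mul [Nontrivial A] (F : A) (r : AdjoinRoot (X ^ 2 - C F : A[X])) :
    coefLM F 1 (AdjoinRoot.root (X ^ 2 - C F : A[X]) * r) = coefLM F 0 r := by
  rw [root_mul_decomp, map_add, coef1_alg, coef1_algX, zero_add]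

lemma coef_smul (F : A) (i : ℕ) (a : A) (r : AdjoinRoot (X ^ 2 - C F : A[X])) :
    coefLM F i (algebraMap A _ a * r) = a * coefLM F i r := by
  rw [← Algebra.smul_def, map_smul, smul_eq_mul]

lemma zLift_root (F : A) {M : Type} [AddCommGroup M] [Module A M] (Nend : Module.End A M)
    (hN : Nend * Nend = algebraMap A (Module.End A M) F) :
    zLift F Nend hN (AdjoinRoot.root (X ^ 2 - C F : A[X])) = Nend := by
  show (Ideal.Quotient.lift _ _ _) (Ideal.Quotient.mk _ X) = Nend
  rw [Ideal.Quotient.lift_mk]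
  simp

lemma zLift_alg (F : A) {M : Type} [AddCommGroup M] [Module A M] (Nend : Module.End A M)
    (hN : Nend * Nend = algebraMap A (Module.End A M) F) (x : A) :
    zLift F Nend hN (algebraMap A (AdjoinRoot (X ^ 2 - C F : A[X])) x)
      = algebraMap A (Module.End A M) x := by
  rw [AdjoinRoot.algebraMap_eq]
  show (Ideal.Quotient.lift _ _ _) (Ideal.Quotient.mk _ (C x)) = _
  rw [Ideal.Quotient.lift_mk]
  simp

lemma zmod_smul_def (F : A) {M : Type} [AddCommGroup M] [Module A M] (Nend : Module.End A M)
    (hN : Nend * Nend = algebraMap A (Module.End A M) F)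
    (r : AdjoinRoot (X ^ 2 - C F : A[X])) (m : M) :
    (letI := zModule F Nend hN; r • m) = zLift F Nend hN r m := rfl

lemma root_smul (F : A) (N : Matrix (Fin 2) (Fin 2) A) (hsq : N * N = F • 1) (m : Fin 2 → A) :
    (letI := zModule F (matToEnd N) (matToEnd_sq hsq)
     AdjoinRoot.root (X ^ 2 - C F : A[X]) • m) = matToEnd N m := by
  rw [zmod_smul_def, zLift_root]

lemma alg_smul (F : A) (N : Matrix (Fin 2) (Fin 2) A) (hsq : N * N = F • 1) (a : A)
    (m : Fin 2 → A) :
    (letI := zModule F (matToEnd N) (matToEnd_sq hsq)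
     algebraMap A (AdjoinRoot (X ^ 2 - C F : A[X])) a • m) = a • m := by
  rw [zmod_smul_def, zLift_alg]
  rfl

lemma NN_apply (F : A) (N : Matrix (Fin 2) (Fin 2) A) (hsq : N * N = F • 1) (m : Fin 2 → A) :
    matToEnd N (matToEnd N m) = F • m := by
  have h : (matToEnd N * matToEnd N) m = F • m := by
    rw [matToEnd_sq hsq]; rfl
  exact h

/-- A trivial linear equivalence between subsingleton modules. -/
def trivEquiv (X Y : Type) [AddCommGroup X] [Module A X] [AddCommGroup Y] [Module A Y]
    [Subsingleton X] [Subsingleton Y] : X ≃ₗ[A] Y where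
  toFun _ := 0
  map_add' _ _ := Subsingleton.elim _ _
  map_smul' _ _ := Subsingleton.elim _ _
  invFun _ := 0
  left_inv _ := Subsingleton.elim _ _
  right_inv _ := Subsingleton.elim _ _

lemma mul_formula [Nontrivial A] (F : A) (a b u v : A) :
    (algebraMap A (AdjoinRoot (X ^ 2 - C F : A[X])) a +
        algebraMap A _ b * AdjoinRoot.root (X ^ 2 - C F : A[X])) *
      (algebraMap A _ u + algebraMap A _ v * AdjoinRoot.root (X ^ 2 - C F : A[X]))
      = algebraMap A _ (a * u + F * (b * v)) +
        algebraMap A _ (a * v + b * u) * AdjoinRoot.root (X ^ 2 - C F : A[X]) := by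
  have h2 : AdjoinRoot.root (X ^ 2 - C F : A[X]) * AdjoinRoot.root (X ^ 2 - C F : A[X])
      = algebraMap A _ F := by rw [← sq]; exact root_sq F
  have expand : (algebraMap A (AdjoinRoot (X ^ 2 - C F : A[X])) a +
        algebraMap A _ b * AdjoinRoot.root (X ^ 2 - C F : A[X])) *
      (algebraMap A _ u + algebraMap A _ v * AdjoinRoot.root (X ^ 2 - C F : A[X]))
      = algebraMap A _ a * algebraMap A _ u +
        (algebraMap A _ b * algebraMap A _ v) *
          (AdjoinRoot.root (X ^ 2 - C F : A[X]) * AdjoinRoot.root (X ^ 2 - C F : A[X])) +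
        (algebraMap A _ a * algebraMap A _ v + algebraMap A _ b * algebraMap A _ u) *
          AdjoinRoot.root (X ^ 2 - C F : A[X]) := by ring
  rw [expand, h2]
  simp only [map_add, map_mul]
  ring

/-- The forward map `φ ↦ φ₂`. -/
def fwdHom (F : A) (N : Matrix (Fin 2) (Fin 2) A) (hsq : N * N = F • 1) :
    letI := zModule F (matToEnd N) (matToEnd_sq hsq)
    ((Fin 2 → A) →ₗ[AdjoinRoot (X ^ 2 - C F : A[X])] AdjoinRoot (X ^ 2 - C F : A[X]))
      →ₗ[A] ((Fin 2 → A) →ₗ[A] A) :=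
  letI := zModule F (matToEnd N) (matToEnd_sq hsq)
  { toFun := fun φ =>
      { toFun := fun m => coefLM F 1 (φ m)
        map_add' := fun m m' => by
          show coefLM F 1 (φ (m + m')) = coefLM F 1 (φ m) + coefLM F 1 (φ m')
          rw [map_add, map_add]
        map_smul' := fun a m => by
          show coefLM F 1 (φ (a • m)) = a • coefLM F 1 (φ m)
          rw [← alg_smul F N hsq a m, map_smul, smul_eq_mul, coef_smul, smul_eq_mul] }
    map_add' := fun φ φ' => LinearMap.ext fun m => by
      simp [LinearMap.add_apply, map_add]
    map_smul' := fun a φ => LinearMap.ext fun m => by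
      simp [LinearMap.smul_apply, map_smul] }

/-- The backward map `ψ ↦ (m ↦ ψ(Nm) + ψ(m)·z)`. -/
def bwdHom [Nontrivial A] (F : A) (N : Matrix (Fin 2) (Fin 2) A) (hsq : N * N = F • 1) :
    letI := zModule F (matToEnd N) (matToEnd_sq hsq)
    ((Fin 2 → A) →ₗ[A] A) →ₗ[A]
      ((Fin 2 → A) →ₗ[AdjoinRoot (X ^ 2 - C F : A[X])] AdjoinRoot (X ^ 2 - C F : A[X])) :=
  letI := zModule F (matToEnd N) (matToEnd_sq hsq)
  { toFun := fun ψ =>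
      { toFun := fun m => algebraMap A _ (ψ (matToEnd N m)) +
          algebraMap A _ (ψ m) * AdjoinRoot.root (X ^ 2 - C F : A[X])
        map_add' := fun m m' => by
          simp only [map_add]
          ring
        map_smul' := fun r m => by
          rw [RingHom.id_apply, smul_eq_mul]
          have hsm : r • m = coefLM F 0 r • m + coefLM F 1 r • matToEnd N m := by
            conv_lhs => rw [decomp F r]
            rw [add_smul, mul_smul, alg_smul F N hsq, alg_smul F N hsq, root_smul F N hsq]
          rw [hsm]
          simp only [map_add, map_smul, NN_apply F N hsq, smul_eq_mul]
          conv_rhs => rw [decomp F r]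
          rw [mul_formula]
          simp only [map_add, map_mul]
          ring }
    map_add' := fun ψ ψ' => LinearMap.ext fun m => by
      simp only [LinearMap.add_apply, LinearMap.coe_mk, AddHom.coe_mk, map_add]
      ring
    map_smul' := fun a ψ => LinearMap.ext fun m => by
      simp only [LinearMap.smul_apply, LinearMap.coe_mk, AddHom.coe_mk, RingHom.id_apply,
        smul_eq_mul, map_mul, Algebra.smul_def]
      ring }

/-- The isomorphism `Hom_R(M,R) ≃ Hom_A(M,A)`. -/
def eIso [Nontrivial A] (F : A) (N : Matrix (Fin 2) (Fin 2) A) (hsq : N * N = F • 1) :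
    letI := zModule F (matToEnd N) (matToEnd_sq hsq)
    ((Fin 2 → A) →ₗ[AdjoinRoot (X ^ 2 - C F : A[X])] AdjoinRoot (X ^ 2 - C F : A[X]))
      ≃ₗ[A] ((Fin 2 → A) →ₗ[A] A) :=
  letI := zModule F (matToEnd N) (matToEnd_sq hsq)
  LinearEquiv.ofLinear (fwdHom F N hsq) (bwdHom F N hsq)
    (LinearMap.ext fun ψ => LinearMap.ext fun m => by
      show coefLM F 1 (algebraMap A _ (ψ (matToEnd N m)) +
        algebraMap A _ (ψ m) * AdjoinRoot.root (X ^ 2 - C F : A[X])) = ψ m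
      rw [map_add, coef1_alg, coef1_algX, zero_add])
    (LinearMap.ext fun φ => LinearMap.ext fun m => by
      show algebraMap A _ (coefLM F 1 (φ (matToEnd N m))) +
        algebraMap A _ (coefLM F 1 (φ m)) * AdjoinRoot.root (X ^ 2 - C F : A[X]) = φ m
      have hz : φ (matToEnd N m) = AdjoinRoot.root (X ^ 2 - C F : A[X]) * φ m := by
        rw [← root_smul F N hsq m, map_smul, smul_eq_mul]
      rw [hz, coef1_root_mul]
      exact (decomp F (φ m)).symm)

lemma eIso_apply [Nontrivial A] (F : A) (N : Matrix (Fin 2) (Fin 2) A) (hsq : N * N = F • 1)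
    (φ : letI := zModule F (matToEnd N) (matToEnd_sq hsq)
      ((Fin 2 → A) →ₗ[AdjoinRoot (X ^ 2 - C F : A[X])] AdjoinRoot (X ^ 2 - C F : A[X])))
    (m : Fin 2 → A) :
    eIso F N hsq φ m = coefLM F 1 (φ m) := rfl

lemma apply_eq (ψ : (Fin 2 → A) →ₗ[A] A) (v : Fin 2 → A) :
    ψ v = v 0 * ψ (Pi.single 0 1) + v 1 * ψ (Pi.single 1 1) := by
  have hv : v = v 0 • (Pi.single 0 1 : Fin 2 → A) + v 1 • (Pi.single 1 1 : Fin 2 → A) := by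
    funext k; fin_cases k <;> simp
  conv_lhs => rw [hv]
  simp [map_add, map_smul]

set_option maxHeartbeats 1000000 in
theorem dual_of_rank_two_module_over_double_cover
    (F : A) (N : Matrix (Fin 2) (Fin 2) A)
    (htr : Matrix.trace N = 0) (hsq : N * N = F • 1) :
    letI : Module (AdjoinRoot (X ^ 2 - C F : A[X])) (Fin 2 → A) :=
      zModule F (matToEnd N) (matToEnd_sq hsq)
    ∃ e : ((Fin 2 → A) →ₗ[AdjoinRoot (X ^ 2 - C F : A[X])] AdjoinRoot (X ^ 2 - C F : A[X]))
        ≃ₗ[A] ((Fin 2 → A) →ₗ[A] A),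
      -- `e φ` is the coefficient `φ₂` of `z` in `φ = φ₁ + φ₂·z`:
      (∀ φ, ∀ m : Fin 2 → A, ∃ x : A,
        φ m = algebraMap A (AdjoinRoot (X ^ 2 - C F : A[X])) x +
          algebraMap A (AdjoinRoot (X ^ 2 - C F : A[X])) (e φ m) *
            AdjoinRoot.root (X ^ 2 - C F : A[X])) ∧
      -- multiplication by `z` corresponds to `φ₂ ↦ φ₂ ∘ N`:
      (∀ φ, e (AdjoinRoot.root (X ^ 2 - C F : A[X]) • φ) = (e φ).comp (matToEnd N)) ∧
      -- in particular, `Hom_R(M, R) ≅ A²` as `R`-modules, with `z` acting on `A²` by `Nᵗ`: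
      (∃ g : ((Fin 2 → A) →ₗ[AdjoinRoot (X ^ 2 - C F : A[X])] AdjoinRoot (X ^ 2 - C F : A[X]))
          ≃ₗ[A] (Fin 2 → A),
        ∀ φ, g (AdjoinRoot.root (X ^ 2 - C F : A[X]) • φ) = matToEnd N.transpose (g φ)) := by
  letI := zModule F (matToEnd N) (matToEnd_sq hsq)
  rcases subsingleton_or_nontrivial A with hA | hA
  · haveI : Subsingleton (AdjoinRoot (X ^ 2 - C F : A[X])) := Module.subsingleton A _
    haveI : Subsingleton
        ((Fin 2 → A) →ₗ[AdjoinRoot (X ^ 2 - C F : A[X])] AdjoinRoot (X ^ 2 - C F : A[X])) :=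
      ⟨fun f g => LinearMap.ext fun m => Subsingleton.elim _ _⟩
    haveI : Subsingleton ((Fin 2 → A) →ₗ[A] A) :=
      ⟨fun f g => LinearMap.ext fun m => Subsingleton.elim _ _⟩
    exact ⟨trivEquiv _ _, fun φ m => ⟨0, Subsingleton.elim _ _⟩,
      fun φ => Subsingleton.elim _ _,
      ⟨trivEquiv _ _, fun φ => Subsingleton.elim _ _⟩⟩
  · have hp2 : ∀ φ, eIso F N hsq (AdjoinRoot.root (X ^ 2 - C F : A[X]) • φ)
        = (eIso F N hsq φ).comp (matToEnd N) := by
      intro φ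
      apply LinearMap.ext
      intro m
      rw [LinearMap.comp_apply, eIso_apply, eIso_apply, LinearMap.smul_apply, smul_eq_mul,
        coef1_root_mul]
      have hz : φ (matToEnd N m) = AdjoinRoot.root (X ^ 2 - C F : A[X]) * φ m := by
        rw [← root_smul F N hsq m, map_smul, smul_eq_mul]
      rw [hz, coef1_root_mul]
    refine ⟨eIso F N hsq, ?_, hp2, ?_⟩
    · intro φ m
      exact ⟨coefLM F 0 (φ m), by rw [eIso_apply]; exact decomp F (φ m)⟩
    · refine ⟨(eIso F N hsq).trans (LinearEquiv.piRing A A (Fin 2) A), ?_⟩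
      intro φ
      funext i
      simp only [LinearEquiv.trans_apply, LinearEquiv.piRing_apply, hp2, LinearMap.comp_apply]
      rw [apply_eq (eIso F N hsq φ)]
      show _ = Matrix.toLinAlgEquiv' N.transpose
        (fun j => eIso F N hsq φ (Pi.single j 1)) i
      simp [matToEnd, Matrix.mulVec, dotProduct, Fin.sum_univ_two, Pi.single_apply,
        Matrix.transpose_apply]
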